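/- If a DAG G satisfies the sparsest Markov representation assumption with respect to a CI model, then G satisfies the P-minimality assumption: there is no Markov DAG G' whose set of d-separation statements strictly contains that of G. -/

import Mathlib

open scoped Classical

/-- A directed acyclic graph on `Fin p`: a finite edge set together with a
topological ordering witnessing acyclicity. -/
structure DAG (p : ℕ) where
  edges : Finset (Fin p × Fin p)
  acyclic : ∃ σ : Equiv.Perm (Fin p), ∀ e ∈ edges, σ.symm e.1 < σ.symm e.2

namespace DAG

variable {p : ℕ}

def edgeRel (G : DAG p) (a b : Fin p) : Prop := (a, b) ∈ G.edges

/-- adjacency in the skeleton -/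
def adj (G : DAG p) (a b : Fin p) : Prop := (a, b) ∈ G.edges ∨ (b, a) ∈ G.edges

/-- the skeleton as a finite set of unordered pairs -/
def skeleton (G : DAG p) : Finset (Sym2 (Fin p)) := G.edges.image (fun e => s(e.1, e.2))

/-- `b` is a collider on a path segment `a - b - c`. -/
def isCollider (G : DAG p) (a b c : Fin p) : Prop := (a, b) ∈ G.edges ∧ (c, b) ∈ G.edges

/-- `b` is in `S` or an ancestor of some element of `S`. -/
def ancestorOfSet (G : DAG p) (b : Fin p) (S : Finset (Fin p)) : Prop :=
  ∃ s ∈ S, Relation.ReflTransGen G.edgeRel b s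

/-- a (simple, undirected) path from `i` to `j` in the skeleton, as a list of vertices -/
def IsTrail (G : DAG p) (i j : Fin p) (l : List (Fin p)) : Prop :=
  l.Chain' G.adj ∧ l.Nodup ∧ 2 ≤ l.length ∧ l.head? = some i ∧ l.getLast? = some j

/-- the path `l` d-connects its endpoints given `S`: every collider on it is in `S` or
has a descendant in `S`, and every non-collider on it is not in `S`. -/
def dConnectsPath (G : DAG p) (S : Finset (Fin p)) (l : List (Fin p)) : Prop :=
  ∀ a b c : Fin p, [a, b, c] <:+: l →
    (G.isCollider a b c → G.ancestorOfSet b S) ∧ (¬ G.isCollider a b c → b ∉ S)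

def dConnected (G : DAG p) (i j : Fin p) (S : Finset (Fin p)) : Prop :=
  ∃ l : List (Fin p), G.IsTrail i j l ∧ G.dConnectsPath S l

def dSep (G : DAG p) (i j : Fin p) (S : Finset (Fin p)) : Prop :=
  i ≠ j ∧ ¬ G.dConnected i j S

end DAG

/-- A (pairwise) conditional independence model: `CI i j S` means
`X_i ⫫ X_j | X_S`. -/
abbrev CIModel (p : ℕ) := Fin p → Fin p → Finset (Fin p) → Prop

variable {p : ℕ}

/-- `G` is Markov w.r.t. the CI model: every d-separation is a CI statement. -/
def Markov (G : DAG p) (CI : CIModel p) : Prop :=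
  ∀ i j S, G.dSep i j S → CI i j S

/-- Markov equivalence: same d-separation statements. -/
def MarkovEquiv (G G' : DAG p) : Prop :=
  ∀ i j S, G.dSep i j S ↔ G'.dSep i j S

/-- `π` is a topological ordering of `G`. -/
def IsTopOrder (G : DAG p) (π : Equiv.Perm (Fin p)) : Prop :=
  ∀ e ∈ G.edges, π.symm e.1 < π.symm e.2

/-- the predecessors `{π 0, …, π (k-1)}` of position `k` in the ordering `π` -/
def predSet (π : Equiv.Perm (Fin p)) (k : Fin p) : Finset (Fin p) :=
  (Finset.univ.filter (fun m => m < k)).image π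

/-- The minimal I-map `G_π`: for `j < k` there is an edge `π j → π k` iff
`π j` and `π k` are conditionally dependent given all other predecessors of `π k`. -/
noncomputable def minimalIMap (CI : CIModel p) (π : Equiv.Perm (Fin p)) : DAG p where
  edges := Finset.univ.filter (fun q : Fin p × Fin p =>
    ∃ j k : Fin p, j < k ∧ q = (π j, π k) ∧ ¬ CI (π j) (π k) ((predSet π k).erase (π j)))
  acyclic := ⟨π, by
    intro e he
    rw [Finset.mem_filter] at he
    obtain ⟨-, j, k, hjk, rfl, -⟩ := he
    simpa using hjk⟩

/-- the minimal number of edges of a minimal I-map `G_π` over all permutations `π` -/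
noncomputable def spScore (CI : CIModel p) : ℕ :=
  ((Finset.univ : Finset (Equiv.Perm (Fin p))).image
    (fun π => (minimalIMap CI π).edges.card)).min' (Finset.univ_nonempty.image _)

/-- adjacency-faithfulness: endpoints of edges of `G` are conditionally dependent
given any conditioning set. -/
def AdjFaithful (G : DAG p) (CI : CIModel p) : Prop :=
  ∀ e ∈ G.edges, ∀ S : Finset (Fin p), e.1 ∉ S → e.2 ∉ S →
    ¬ CI e.1 e.2 S ∧ ¬ CI e.2 e.1 S

/-- the sparsest Markov representation assumption -/
def SMR (G : DAG p) (CI : CIModel p) : Prop :=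
  Markov G CI ∧
    ∀ G' : DAG p, Markov G' CI → ¬ MarkovEquiv G' G → G.edges.card < G'.edges.card

/-- the set of d-separation statements of `G` -/
def DsepSet (G : DAG p) : Set (Fin p × Fin p × Finset (Fin p)) :=
  {t | G.dSep t.1 t.2.1 t.2.2}

/-- P-minimality: no Markov DAG entails strictly more d-separations. -/
def PMinimal (G : DAG p) (CI : CIModel p) : Prop :=
  ∀ G' : DAG p, Markov G' CI → ¬ (DsepSet G ⊂ DsepSet G')

/-!
If `DsepSet G ⊊ DsepSet G'` with `G'` Markov, then `G'` is not Markov equivalent to `G`, so the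
sparsest Markov representation assumption gives `|E(G)| < |E(G')|`. On the other hand every edge
of `G'` joins vertices adjacent in `G`: vertices non-adjacent in `G` are d-separated in `G` (by the
vertices preceding the later one in a topological order), hence in `G'`, whereas adjacent vertices
are never d-separated. Since a DAG has as many edges as its skeleton, `|E(G')| ≤ |E(G)|`.
-/

theorem List.exists_triple_infix_of_mem {α : Type*} {l : List α} {x : α} (hx : x ∈ l)
    (hhead : l.head? ≠ some x) (hlast : l.getLast? ≠ some x) :
    ∃ a c, [a, x, c] <:+: l := by
  obtain ⟨s, t, rfl⟩ := List.append_of_mem hx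
  rcases s.eq_nil_or_concat' with rfl | ⟨s, a, rfl⟩
  · simp at hhead
  rcases t with _ | ⟨c, t⟩
  · simp at hlast
  exact ⟨a, c, s, t, by simp⟩

namespace DAG

variable {G : DAG p}

theorem adj_comm {a b : Fin p} : G.adj a b ↔ G.adj b a := Or.comm

theorem isCollider_comm {a b c : Fin p} : G.isCollider a b c ↔ G.isCollider c b a := And.comm

theorem IsTrail.reverse {i j : Fin p} {l : List (Fin p)} (h : G.IsTrail i j l) :
    G.IsTrail j i l.reverse := by
  obtain ⟨hchain, hnodup, hlen, hhead, hlast⟩ := h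
  refine ⟨?_, List.nodup_reverse.2 hnodup, by simpa using hlen, by simpa using hlast,
    by simpa using hhead⟩
  exact List.isChain_reverse.2 (hchain.imp fun _ _ => adj_comm.1)

theorem dConnectsPath.reverse {S : Finset (Fin p)} {l : List (Fin p)}
    (h : G.dConnectsPath S l) : G.dConnectsPath S l.reverse := by
  intro a b c habc
  rw [← List.reverse_infix, List.reverse_reverse] at habc
  simpa only [isCollider_comm] using h c b a habc

theorem dConnected.symm {i j : Fin p} {S : Finset (Fin p)} (h : G.dConnected i j S) :
    G.dConnected j i S :=
  let ⟨l, hl, hconn⟩ := h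
  ⟨l.reverse, hl.reverse, hconn.reverse⟩

theorem dSep.symm {i j : Fin p} {S : Finset (Fin p)} (h : G.dSep i j S) : G.dSep j i S :=
  ⟨h.1.symm, fun hc => h.2 hc.symm⟩

theorem ne_of_adj {a b : Fin p} (h : G.adj a b) : a ≠ b := by
  obtain ⟨σ, hσ⟩ := G.acyclic
  rintro rfl
  exact h.elim (fun he => (hσ _ he).false) (fun he => (hσ _ he).false)

theorem not_dSep_of_adj {a b : Fin p} (h : G.adj a b) (S : Finset (Fin p)) :
    ¬ G.dSep a b S := by
  refine fun hsep => hsep.2 ⟨[a, b], ⟨List.isChain_pair.2 h, ?_, le_rfl, rfl, rfl⟩, ?_⟩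
  · simpa using ne_of_adj h
  · intro x y z hxyz
    simpa using hxyz.length_le

theorem mem_skeleton {a b : Fin p} : s(a, b) ∈ G.skeleton ↔ G.adj a b := by
  simp only [skeleton, Finset.mem_image, Sym2.eq_iff, adj, Prod.exists]
  constructor
  · rintro ⟨x, y, hxy, ⟨rfl, rfl⟩ | ⟨rfl, rfl⟩⟩
    exacts [Or.inl hxy, Or.inr hxy]
  · rintro (hab | hba)
    exacts [⟨a, b, hab, Or.inl ⟨rfl, rfl⟩⟩, ⟨b, a, hba, Or.inr ⟨rfl, rfl⟩⟩]

theorem card_skeleton : G.skeleton.card = G.edges.card := by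
  obtain ⟨σ, hσ⟩ := G.acyclic
  refine Finset.card_image_of_injOn ?_
  rintro ⟨a, b⟩ hab ⟨c, d⟩ hcd hsym
  rcases Sym2.eq_iff.1 hsym with ⟨rfl, rfl⟩ | ⟨rfl, rfl⟩
  · rfl
  · exact absurd (hσ _ hab) (hσ _ hcd).asymm

theorem card_edges_le_of_forall_adj {G' : DAG p} (h : ∀ a b, G'.adj a b → G.adj a b) :
    G'.edges.card ≤ G.edges.card := by
  rw [← card_skeleton, ← card_skeleton]
  refine Finset.card_le_card fun z hz => ?_
  induction z using Sym2.ind with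
  | _ a b => exact mem_skeleton.2 (h a b (mem_skeleton.1 hz))

end DAG

namespace IsTopOrder

variable {G : DAG p} {π : Equiv.Perm (Fin p)}

theorem le_of_reflTransGen (hπ : IsTopOrder G π) {a b : Fin p}
    (h : Relation.ReflTransGen G.edgeRel a b) : π.symm a ≤ π.symm b := by
  induction h with
  | refl => exact le_rfl
  | tail _ hbc ih => exact ih.trans (hπ _ hbc).le

theorem mem_edges_of_adj (hπ : IsTopOrder G π) {a b : Fin p} (h : G.adj a b)
    (hle : π.symm a ≤ π.symm b) : (a, b) ∈ G.edges :=
  h.resolve_right fun hba => (hπ _ hba).not_ge hle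

theorem isCollider_of_le (hπ : IsTopOrder G π) {a b c : Fin p} (hab : G.adj a b)
    (hbc : G.adj b c) (ha : π.symm a ≤ π.symm b) (hc : π.symm c ≤ π.symm b) :
    G.isCollider a b c :=
  ⟨hπ.mem_edges_of_adj hab ha, hπ.mem_edges_of_adj (DAG.adj_comm.1 hbc) hc⟩

/- A vertex of highest position on `l` that is not an endpoint is a collider, so it has a
descendant in `S`. -/
theorem le_of_mem_of_dConnectsPath (hπ : IsTopOrder G π) {k u v : Fin p}
    {S : Finset (Fin p)} (hS : ∀ s ∈ S, π.symm s < k) {l : List (Fin p)}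
    (hl : G.IsTrail u v l) (hu : π.symm u ≤ k) (hv : π.symm v ≤ k)
    (hconn : G.dConnectsPath S l) {x : Fin p} (hx : x ∈ l) : π.symm x ≤ k := by
  obtain ⟨hchain, -, -, hhead, hlast⟩ := hl
  obtain ⟨m, hml, hmax⟩ := l.toFinset.exists_max_image (fun y => π.symm y) ⟨x, by simpa⟩
  simp only [List.mem_toFinset] at hml hmax
  refine (hmax x hx).trans (not_lt.1 fun hkm => ?_)
  obtain ⟨a, c, hamc⟩ := List.exists_triple_infix_of_mem hml
    (by rw [hhead]; rintro ⟨⟩; exact hu.not_gt hkm)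
    (by rw [hlast]; rintro ⟨⟩; exact hv.not_gt hkm)
  have hmem : ∀ y ∈ [a, m, c], y ∈ l := fun y hy => hamc.subset hy
  obtain ⟨ham, hmc⟩ := List.isChain_cons_cons.1 (hchain.infix hamc)
  obtain ⟨s, hsS, hms⟩ := (hconn a m c hamc).1 <|
    hπ.isCollider_of_le ham (List.isChain_pair.1 hmc) (hmax a (hmem a (by simp)))
      (hmax c (hmem c (by simp)))
  exact ((hπ.le_of_reflTransGen hms).trans_lt (hS s hsS)).not_gt hkm

/- Every vertex of a d-connecting trail from `π k` to `π j` lies at a position `≤ k`, so the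
second vertex `b` lies before `π k`, hence in the conditioning set; but the edge `b → π k` makes
`b` a non-collider. -/
theorem dSep_predSet_erase (hπ : IsTopOrder G π) {j k : Fin p} (hjk : j < k)
    (hadj : ¬ G.adj (π j) (π k)) : G.dSep (π j) (π k) ((predSet π k).erase (π j)) := by
  refine DAG.dSep.symm ⟨(π.injective.ne hjk.ne).symm, ?_⟩
  rintro ⟨l, hl, hconn⟩
  have hS : ∀ s ∈ (predSet π k).erase (π j), π.symm s < k := by
    intro s hs
    obtain ⟨m, hm, rfl⟩ := Finset.mem_image.1 (Finset.mem_of_mem_erase hs)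
    simpa using hm
  have hle : ∀ x ∈ l, π.symm x ≤ k := fun x hx =>
    hπ.le_of_mem_of_dConnectsPath hS hl (by simp) (by simpa using hjk.le) hconn hx
  obtain ⟨hchain, -, hlen, hhead, hlast⟩ := hl
  rcases l with _ | ⟨_, _ | ⟨b, t⟩⟩
  · simp at hlen
  · simp at hlen
  obtain rfl : _ = π k := by simpa using hhead
  have hkb : G.adj (π k) b := (List.isChain_cons_cons.1 hchain).1
  have hbj : b ≠ π j := by rintro rfl; exact hadj (DAG.adj_comm.1 hkb)
  obtain ⟨a, t, rfl⟩ : ∃ a t', t = a :: t' := by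
    rcases t with _ | ⟨a, t⟩
    · exact absurd (by simpa using hlast) hbj
    · exact ⟨a, t, rfl⟩
  have hbk : π.symm b < k := lt_of_le_of_ne (hle b (by simp)) fun h =>
    DAG.ne_of_adj hkb (by rw [← h, Equiv.apply_symm_apply])
  have hbS : b ∈ (predSet π k).erase (π j) :=
    Finset.mem_erase.2 ⟨hbj, Finset.mem_image.2 ⟨π.symm b, by simpa using hbk, by simp⟩⟩
  refine (hconn (π k) b a (List.prefix_append [π k, b, a] t).isInfix).2 ?_ hbS
  exact fun hcol => (hπ _ hcol.1).not_gt (by simpa using hbk)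

end IsTopOrder

theorem DAG.exists_dSep_of_not_adj {G : DAG p} {i j : Fin p} (hij : i ≠ j)
    (hadj : ¬ G.adj i j) : ∃ S, G.dSep i j S := by
  obtain ⟨π, hπ⟩ := G.acyclic
  rcases lt_or_gt_of_ne (π.symm.injective.ne hij) with hlt | hlt
  · exact ⟨_, by simpa using IsTopOrder.dSep_predSet_erase hπ hlt (by simpa using hadj)⟩
  · exact ⟨_, DAG.dSep.symm <| by
      simpa using IsTopOrder.dSep_predSet_erase hπ hlt (by simpa [DAG.adj_comm] using hadj)⟩

theorem DAG.adj_of_dsepSet_subset {G G' : DAG p} (h : DsepSet G ⊆ DsepSet G') {a b : Fin p}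
    (hab : G'.adj a b) : G.adj a b := by
  by_contra hna
  obtain ⟨S, hS⟩ := G.exists_dSep_of_not_adj (DAG.ne_of_adj hab) hna
  exact DAG.not_dSep_of_adj hab S (h (show (a, b, S) ∈ DsepSet G from hS))

theorem not_markovEquiv_of_dsepSet_ssubset {G G' : DAG p} (h : DsepSet G ⊂ DsepSet G') :
    ¬ MarkovEquiv G' G :=
  fun hequiv => h.2 fun t ht => (hequiv t.1 t.2.1 t.2.2).1 ht

/-- If a DAG satisfies the sparsest Markov representation assumption with respect to
a CI model, then it satisfies the P-minimality assumption: there is no Markov DAG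
whose set of d-separation statements strictly contains that of `G`. -/
theorem SMR_implies_PMinimal (CI : CIModel p) (G : DAG p) (h : SMR G CI) :
    PMinimal G CI := by
  intro G' hG' hssub
  have hsparser := h.2 G' hG' (not_markovEquiv_of_dsepSet_ssubset hssub)
  have hle := DAG.card_edges_le_of_forall_adj fun _ _ => DAG.adj_of_dsepSet_subset hssub.subset
  exact hsparser.not_ge hle
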